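/- Let p ≥ 1 and let f be a monotone norm on ℝⁿ that is differentiable at every point of the nonnegative orthant except the origin and is p-supermodular. Let x, y ∈ ℝⁿ satisfy 0 ≤ x ≤ y coordinatewise, x ≠ 0, and f(y)^{p−1} ≤ 2·f(x)^{p−1}. Then for every coordinate i ∈ {1,…,n}, ∂_i f(x) ≤ 2·∂_i f(y). -/

import Mathlib

/-!
Along a nonnegative direction `v`, supermodularity says that the increment of `t ↦ f(· + t v)^p`
is larger at `y` than at `x`; comparing right derivatives at `t = 0` gives
`f(x)^{p-1} ∂ᵥf(x) ≤ f(y)^{p-1} ∂ᵥf(y)`. Monotonicity makes `∂ᵥf(y) ≥ 0`, so the phase condition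
`f(y)^{p-1} ≤ 2 f(x)^{p-1}` turns this into `∂ᵥf(x) ≤ 2 ∂ᵥf(y)`.
-/

noncomputable section

/-- A monotone norm on ℝⁿ: subadditive, absolutely homogeneous, point-separating, and
monotone on the nonnegative orthant. -/
def IsMonotoneNorm {n : ℕ} (N : (Fin n → ℝ) → ℝ) : Prop :=
  (∀ x y, N (x + y) ≤ N x + N y) ∧
  (∀ (c : ℝ) (x), N (c • x) = |c| * N x) ∧
  (∀ x, N x = 0 → x = 0) ∧
  (∀ x y : Fin n → ℝ, 0 ≤ x → x ≤ y → N x ≤ N y)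

/-- `N` is `p`-supermodular: `N(u+v+w)^p − N(u+v)^p ≥ N(u+w)^p − N(u)^p` for all
nonnegative `u, v, w`. -/
def IsPSupermodular {n : ℕ} (N : (Fin n → ℝ) → ℝ) (p : ℝ) : Prop :=
  ∀ u v w : Fin n → ℝ, 0 ≤ u → 0 ≤ v → 0 ≤ w →
    N (u + w) ^ p - N u ^ p ≤ N (u + v + w) ^ p - N (u + v) ^ p

open Set Topology

theorem le_of_hasDerivAt_of_forall_sub_le {φ ψ : ℝ → ℝ} {a b x₀ : ℝ}
    (hφ : HasDerivAt φ a x₀) (hψ : HasDerivAt ψ b x₀)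
    (h : ∀ t, x₀ < t → φ t - φ x₀ ≤ ψ t - ψ x₀) : a ≤ b := by
  have hmin : IsLocalMinOn (ψ - φ) (Ici x₀) x₀ := by
    refine Filter.eventually_of_mem self_mem_nhdsWithin fun t (ht : x₀ ≤ t) => ?_
    rcases ht.eq_or_lt with rfl | ht
    · exact le_rfl
    · show ψ x₀ - φ x₀ ≤ ψ t - φ t
      linarith [h t ht]
  have hcone : (1 : ℝ) ∈ posTangentConeAt (Ici x₀) x₀ :=
    one_mem_posTangentConeAt_iff_frequently.2
      (Filter.Eventually.frequently (f := 𝓝[>] x₀)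
        (Filter.mem_of_superset self_mem_nhdsWithin Ioi_subset_Ici_self))
  simpa using hmin.hasFDerivWithinAt_nonneg (hψ.sub hφ).hasDerivWithinAt.hasFDerivWithinAt hcone

section LineDeriv

variable {E : Type*} [NormedAddCommGroup E] [NormedSpace ℝ E]

theorem HasFDerivAt.apply_nonneg_of_forall_le {f : E → ℝ} {f' : StrongDual ℝ E} {z v : E}
    (hf : HasFDerivAt f f' z) (hmono : ∀ t : ℝ, 0 < t → f z ≤ f (z + t • v)) : 0 ≤ f' v :=
  le_of_hasDerivAt_of_forall_sub_le (hasDerivAt_const 0 (f z)) (hf.hasLineDerivAt v)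
    fun t ht => by simpa using hmono t ht

theorem HasFDerivAt.hasDerivAt_rpow_comp_add_smul {f : E → ℝ} {f' : StrongDual ℝ E} {z : E}
    (hf : HasFDerivAt f f' z) (v : E) {p : ℝ} (hp : 1 ≤ p) :
    HasDerivAt (fun t : ℝ => f (z + t • v) ^ p) (f' v * p * f z ^ (p - 1)) 0 := by
  simpa using (hf.hasLineDerivAt v).rpow_const (Or.inr hp)

end LineDeriv

namespace IsMonotoneNorm

variable {n : ℕ} {N : (Fin n → ℝ) → ℝ}

theorem map_zero (hN : IsMonotoneNorm N) : N 0 = 0 := by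
  simpa using hN.2.1 0 0

theorem pos_of_nonneg (hN : IsMonotoneNorm N) {x : Fin n → ℝ} (hx : 0 ≤ x) (hx0 : x ≠ 0) :
    0 < N x :=
  (hN.map_zero ▸ hN.2.2.2 0 x le_rfl hx).lt_of_ne' fun h => hx0 (hN.2.2.1 x h)

theorem fderiv_nonneg (hN : IsMonotoneNorm N) {z v : Fin n → ℝ} (hz : 0 ≤ z) (hv : 0 ≤ v)
    (hd : DifferentiableAt ℝ N z) : 0 ≤ fderiv ℝ N z v :=
  hd.hasFDerivAt.apply_nonneg_of_forall_le fun _ ht =>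
    hN.2.2.2 z _ hz (le_add_of_nonneg_right (smul_nonneg ht.le hv))

end IsMonotoneNorm

theorem IsPSupermodular.rpow_mul_fderiv_le {n : ℕ} {N : (Fin n → ℝ) → ℝ} {p : ℝ}
    (hN : IsPSupermodular N p) (hp : 1 ≤ p) {x y v : Fin n → ℝ}
    (hx : 0 ≤ x) (hxy : x ≤ y) (hv : 0 ≤ v)
    (hdx : DifferentiableAt ℝ N x) (hdy : DifferentiableAt ℝ N y) :
    N x ^ (p - 1) * fderiv ℝ N x v ≤ N y ^ (p - 1) * fderiv ℝ N y v := by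
  have key := le_of_hasDerivAt_of_forall_sub_le
    (hdx.hasFDerivAt.hasDerivAt_rpow_comp_add_smul v hp)
    (hdy.hasFDerivAt.hasDerivAt_rpow_comp_add_smul v hp)
    fun t ht => by
      simpa using hN x (y - x) (t • v) hx (sub_nonneg.2 hxy) (smul_nonneg ht.le hv)
  refine le_of_mul_le_mul_left ?_ (zero_lt_one.trans_le hp)
  linarith

/-- Approximate monotonicity of the gradient of a `p`-supermodular norm within a phase:
if `0 ≤ x ≤ y`, `x ≠ 0`, and `f(y)^{p−1} ≤ 2·f(x)^{p−1}`, then `∂ᵢf(x) ≤ 2·∂ᵢf(y)` for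
every coordinate `i`. -/
theorem pSupermodular_gradient_phase {n : ℕ} (p : ℝ) (hp : 1 ≤ p)
    (f : (Fin n → ℝ) → ℝ) (hf : IsMonotoneNorm f)
    (hdiff : ∀ x : Fin n → ℝ, 0 ≤ x → x ≠ 0 → DifferentiableAt ℝ f x)
    (hsup : IsPSupermodular f p)
    (x y : Fin n → ℝ) (hx : 0 ≤ x) (hxy : x ≤ y) (hx0 : x ≠ 0)
    (hphase : f y ^ (p - 1) ≤ 2 * f x ^ (p - 1)) :
    ∀ i : Fin n,
      fderiv ℝ f x (Pi.single i 1) ≤ 2 * fderiv ℝ f y (Pi.single i 1) := by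
  intro i
  have he : (0 : Fin n → ℝ) ≤ Pi.single i 1 := Pi.single_nonneg.2 zero_le_one
  have hy : 0 ≤ y := hx.trans hxy
  have hy0 : y ≠ 0 := fun h => hx0 (le_antisymm (h ▸ hxy) hx)
  have hdx := hdiff x hx hx0
  have hdy := hdiff y hy hy0
  have hpos : 0 < f x ^ (p - 1) := Real.rpow_pos_of_pos (hf.pos_of_nonneg hx hx0) _
  have hgrad_y := hf.fderiv_nonneg hy he hdy
  refine le_of_mul_le_mul_left ?_ hpos
  calc f x ^ (p - 1) * fderiv ℝ f x (Pi.single i 1)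
      ≤ f y ^ (p - 1) * fderiv ℝ f y (Pi.single i 1) :=
        hsup.rpow_mul_fderiv_le hp hx hxy he hdx hdy
    _ ≤ 2 * f x ^ (p - 1) * fderiv ℝ f y (Pi.single i 1) := by gcongr
    _ = f x ^ (p - 1) * (2 * fderiv ℝ f y (Pi.single i 1)) := by ring
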